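/- (Norm bound for an η-approximate subproblem solution.) Let H be a real Hilbert space and Q : H → ℝ ∪ {+∞} an m-strongly convex, proper, lower semicontinuous function with m > 0, Q(0) = 0, unique minimizer p*, and optimal value Q* = Q(p*) ≤ 0. If p satisfies Q(p) − Q* ≤ η (−Q*) for some η ≥ 0, then ‖p‖ ≤ (√η + 1) √(2/m) √(−Q*). -/

import Mathlib

open Metric Filter

/-- `m`-strong convexity for an extended-real-valued function. -/
def StronglyConvexEReal {H : Type*} [NormedAddCommGroup H] [InnerProductSpace ℝ H]
    (m : ℝ) (Q : H → EReal) : Prop :=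
  ∀ x y : H, ∀ a b : ℝ, 0 ≤ a → 0 ≤ b → a + b = 1 →
    Q (a • x + b • y) ≤
      (a : EReal) * Q x + (b : EReal) * Q y - ((m / 2 * a * b * ‖x - y‖ ^ 2 : ℝ) : EReal)

/-!
Strong convexity gives quadratic growth around the minimizer `p*`:
`(m/2)‖q − p*‖² ≤ Q(q) − Q*`. At `q = p` the right side is at most `η(−Q*)`, and at `q = 0`
it is `−Q*`, so `‖p − p*‖ ≤ √η √(2/m) √(−Q*)` and `‖p*‖ ≤ √(2/m) √(−Q*)`; the triangle
inequality `‖p‖ ≤ ‖p − p*‖ + ‖p*‖` concludes.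
-/

open Topology

lemma le_of_forall_one_sub_mul_le {c K : ℝ} (h : ∀ a ∈ Set.Ioo (0 : ℝ) 1, (1 - a) * c ≤ K) :
    c ≤ K := by
  have hlim : Tendsto (fun a : ℝ => (1 - a) * c) (𝓝[>] 0) (𝓝 ((1 - 0) * c)) :=
    ((continuous_const.sub continuous_id).mul continuous_const).continuousAt.tendsto.mono_left
      nhdsWithin_le_nhds
  rw [sub_zero, one_mul] at hlim
  exact le_of_tendsto hlim (mem_of_superset (Ioo_mem_nhdsGT one_pos) h)

lemma EReal.exists_coe_eq_of_sub_coe_le {x : EReal} {r s : ℝ} (hrx : (r : EReal) ≤ x)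
    (hxs : x - r ≤ s) : ∃ v : ℝ, x = v ∧ v - r ≤ s := by
  induction x using EReal.rec with
  | bot => exact absurd hrx (by simp)
  | top => exact absurd hxs (by simp)
  | coe v => exact ⟨v, rfl, by exact_mod_cast hxs⟩

section QuadraticGrowth

variable {H : Type*} [NormedAddCommGroup H] [InnerProductSpace ℝ H]
  {Q : H → EReal} {m Qstar : ℝ} {pstar : H}

lemma StronglyConvexEReal.mul_sq_norm_sub_le (hQ : StronglyConvexEReal m Q)
    (hpstar : ∀ z, Q pstar ≤ Q z) (hQstar : Q pstar = Qstar) {q : H} {qv : ℝ}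
    (hq : Q q = qv) : m / 2 * ‖q - pstar‖ ^ 2 ≤ qv - Qstar := by
  refine le_of_forall_one_sub_mul_le fun a ⟨ha, ha1⟩ => ?_
  have hmix : (Qstar : EReal) ≤
      ((a * qv + (1 - a) * Qstar - m / 2 * a * (1 - a) * ‖q - pstar‖ ^ 2 : ℝ) : EReal) := by
    refine (hQstar ▸ hpstar (a • q + (1 - a) • pstar)).trans
      ((hQ q pstar a (1 - a) ha.le (by linarith) (by ring)).trans_eq ?_)
    rw [hq, hQstar]
    norm_cast
  have hmix' : a * ((1 - a) * (m / 2 * ‖q - pstar‖ ^ 2)) ≤ a * (qv - Qstar) := by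
    linarith [EReal.coe_le_coe_iff.mp hmix]
  exact le_of_mul_le_mul_left hmix' ha

end QuadraticGrowth

lemma norm_le_sqrt_two_div_mul_sqrt_of_half_mul_sq_le {E : Type*} [SeminormedAddCommGroup E]
    {m c : ℝ} (hm : 0 < m) {v : E} (hv : m / 2 * ‖v‖ ^ 2 ≤ c) :
    ‖v‖ ≤ Real.sqrt (2 / m) * Real.sqrt c := by
  rw [← Real.sqrt_mul (by positivity)]
  refine Real.le_sqrt_of_sq_le ?_
  rw [div_mul_eq_mul_div, le_div_iff₀ hm]
  linarith

theorem statement15_general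
    {H : Type*} [NormedAddCommGroup H] [InnerProductSpace ℝ H]
    (Q : H → EReal) (m η Qstar : ℝ) (pstar p : H)
    (hm : 0 < m)
    (hQ_sc : StronglyConvexEReal m Q)
    -- Q(0) = 0
    (hQ0 : Q 0 = 0)
    -- p* is the (unique) minimizer of Q, with optimal value Q* = Q(p*) ≤ 0
    (hpstar : ∀ z : H, Q pstar ≤ Q z)
    (hQstar : Q pstar = (Qstar : EReal))
    -- multiplicative inexactness: Q(p) − Q* ≤ η (−Q*) with η ≥ 0
    (hp : Q p - Q pstar ≤ (η : EReal) * -(Q pstar)) :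
    ‖p‖ ≤ (Real.sqrt η + 1) * Real.sqrt (2 / m) * Real.sqrt (-Qstar) := by
  rw [hQstar] at hp
  obtain ⟨pv, hQp, hpv⟩ := EReal.exists_coe_eq_of_sub_coe_le (hQstar ▸ hpstar p)
    (s := η * -Qstar) (by exact_mod_cast hp)
  have hQstar_nonpos : Qstar ≤ 0 := by exact_mod_cast hQ0 ▸ hQstar ▸ hpstar 0
  have hfar : ‖p - pstar‖ ≤ Real.sqrt (2 / m) * Real.sqrt (η * -Qstar) :=
    norm_le_sqrt_two_div_mul_sqrt_of_half_mul_sq_le hm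
      ((hQ_sc.mul_sq_norm_sub_le hpstar hQstar hQp).trans hpv)
  have hnear : ‖pstar‖ ≤ Real.sqrt (2 / m) * Real.sqrt (-Qstar) := by
    refine norm_le_sqrt_two_div_mul_sqrt_of_half_mul_sq_le hm ?_
    simpa [norm_neg] using hQ_sc.mul_sq_norm_sub_le hpstar hQstar (q := 0) (qv := 0) hQ0
  calc ‖p‖ ≤ ‖pstar‖ + ‖p - pstar‖ := norm_le_norm_add_norm_sub' p pstar
    _ ≤ Real.sqrt (2 / m) * Real.sqrt (-Qstar) +
        Real.sqrt (2 / m) * Real.sqrt (η * -Qstar) := add_le_add hnear hfar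
    _ = (Real.sqrt η + 1) * Real.sqrt (2 / m) * Real.sqrt (-Qstar) := by
      rw [Real.sqrt_mul' η (neg_nonneg.mpr hQstar_nonpos)]
      ring

/-- norm bound for an η-approximate subproblem solution: if `Q` is
`m`-strongly convex, proper, lsc, `Q(0) = 0`, with minimizer `p*` and optimal value
`Q* = Q(p*) ≤ 0`, then `Q(p) − Q* ≤ η(−Q*)` implies
`‖p‖ ≤ (√η + 1)√(2/m)√(−Q*)`. -/
theorem statement15
    {H : Type*} [NormedAddCommGroup H] [InnerProductSpace ℝ H] [CompleteSpace H]
    (Q : H → EReal) (m η Qstar : ℝ) (pstar p : H)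
    (hm : 0 < m)
    (hQ_sc : StronglyConvexEReal m Q)
    -- Q : H → ℝ ∪ {+∞} proper (never −∞, finite somewhere)
    (hQ_nebot : ∀ z : H, Q z ≠ ⊥)
    (hQ_proper : ∃ z : H, Q z ≠ ⊤)
    (hQ_lsc : LowerSemicontinuous Q)
    -- Q(0) = 0
    (hQ0 : Q 0 = 0)
    -- p* is the (unique) minimizer of Q, with optimal value Q* = Q(p*) ≤ 0
    (hpstar : ∀ z : H, Q pstar ≤ Q z)
    (hQstar : Q pstar = (Qstar : EReal))
    (hQstar_le : Qstar ≤ 0)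
    -- multiplicative inexactness: Q(p) − Q* ≤ η (−Q*) with η ≥ 0
    (hη : 0 ≤ η)
    (hp : Q p - Q pstar ≤ (η : EReal) * -(Q pstar)) :
    ‖p‖ ≤ (Real.sqrt η + 1) * Real.sqrt (2 / m) * Real.sqrt (-Qstar) :=
  statement15_general Q m η Qstar pstar p hm hQ_sc hQ0 hpstar hQstar hp
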